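/- Let n = 2^d and a ∈ ℝ^{2^d} have QTT representation a(k) = A⁽¹⁾_{k₁} ⋯ A⁽ᵈ⁾_{k_d}. Then the left-shifted vector c = [a(1), a(2), ..., a(2^d - 1), y]ᵀ has QTT representation c(k) = C⁽¹⁾_{k₁} ⋯ C⁽ᵈ⁾_{k_d} with cores C⁽¹⁾₀ = [A⁽¹⁾₁ 0], C⁽¹⁾₁ = [0 1], C⁽ᵖ⁾₀ = [[A⁽ᵖ⁾₀, 0], [c_p, 0]], C⁽ᵖ⁾₁ = [[A⁽ᵖ⁾₁, 0], [0, 1]] for 2 ≤ p ≤ d-1, C⁽ᵈ⁾₀ = [[A⁽ᵈ⁾₀], [c_d]], C⁽ᵈ⁾₁ = [[A⁽ᵈ⁾₁], [y]], where c_q = A⁽¹⁾₀ ⋯ A⁽q-1⁾₀ A⁽q⁾₁. -/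

import Mathlib

/-!
Read `c k = a (k + 1)` as "increment `k`, then evaluate `a`": the extra rank-one channel of the
cores carries the binary carry of the increment. The product of the first `q + 1` cores is the
row `[0 1]` while the low `q + 1` bits of `k` are all ones, and otherwise `[P 0]`, where `P` is
the product of the first `q + 1` cores of `a` selected by the bits of `k + 1`. A `1`-bit of `k`
passes the carry on; a `0`-bit absorbs it through the row `c_q`, the prefix selected by the bits
of `2^(q-1)`, which are exactly the low bits of `k + 1` at that point. The last core then reads
off either `a (k + 1)` or, when the carry leaves the top bit (`k = 2^d - 1`), the value `y`.
-/

/-- Product `M₀ M₁ ⋯ M_{d-1}` of a chain of matrices of compatible sizes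
(tensor-train core product). -/
noncomputable def ttProd (ι : ℕ → Type) [∀ p, Fintype (ι p)] [∀ p, DecidableEq (ι p)] :
    (d : ℕ) → ((p : ℕ) → p < d → Matrix (ι p) (ι (p + 1)) ℝ) → Matrix (ι 0) (ι d) ℝ
  | 0, _ => 1
  | d + 1, A => ttProd ι d (fun p hp => A p (Nat.lt_succ_of_lt hp)) * A d (Nat.lt_succ_self d)

/-- The `p`-th binary digit (little-endian) of `k`. -/
def qttBit (p k : ℕ) : Fin 2 := ⟨k / 2 ^ p % 2, Nat.mod_lt _ (by norm_num)⟩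

open Matrix

theorem qttBit_mod_two_pow {p s : ℕ} (h : p < s) (k : ℕ) : qttBit p (k % 2 ^ s) = qttBit p k := by
  obtain ⟨t, rfl⟩ := Nat.exists_eq_add_of_lt h
  refine Fin.ext ?_
  simp only [qttBit, pow_add, pow_succ, mul_assoc, Nat.mod_mul_right_div_self]
  exact Nat.mod_mod_of_dvd _ (Dvd.intro_left _ rfl)

theorem qttBit_two_pow {p s : ℕ} (h : p ≤ s) : qttBit p (2 ^ s) = if p = s then 1 else 0 := by
  obtain ⟨t, rfl⟩ := Nat.exists_eq_add_of_le h
  refine Fin.ext ?_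
  rcases t with _ | t
  · simp [qttBit]
  · simp [qttBit, pow_add, pow_succ]

theorem qttBit_succ_of_not_dvd {s k : ℕ} (h : ¬ 2 ^ s ∣ k + 1) : qttBit s (k + 1) = qttBit s k :=
  Fin.ext (congrArg (· % 2) (Nat.succ_div_of_not_dvd h))

theorem two_pow_succ_dvd_succ_iff {s k : ℕ} :
    2 ^ (s + 1) ∣ k + 1 ↔ 2 ^ s ∣ k + 1 ∧ qttBit s k = 1 := by
  rw [pow_succ, Fin.ext_iff]
  constructor
  · intro h
    have hs : 2 ^ s ∣ k + 1 := (Dvd.intro 2 rfl).trans h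
    refine ⟨hs, ?_⟩
    have := (Nat.dvd_div_iff_mul_dvd hs).2 h
    simp only [Nat.succ_div_of_dvd hs, qttBit] at this ⊢
    omega
  · rintro ⟨hs, hb⟩
    refine (Nat.dvd_div_iff_mul_dvd hs).1 ?_
    simp only [Nat.succ_div_of_dvd hs, qttBit] at hb ⊢
    omega

theorem succ_mod_two_pow_succ {s k : ℕ} (h : 2 ^ s ∣ k + 1) (hb : qttBit s k = 0) :
    (k + 1) % 2 ^ (s + 1) = 2 ^ s := by
  rw [Nat.mod_pow_succ, Nat.mod_eq_zero_of_dvd h, Nat.succ_div_of_dvd h]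
  have : (k / 2 ^ s + 1) % 2 = 1 := by
    simp only [qttBit, Fin.ext_iff] at hb
    omega
  rw [this, zero_add, mul_one]

section QTT

variable {ι : ℕ → Type} [∀ p, Fintype (ι p)] [∀ p, DecidableEq (ι p)]

theorem ttProd_congr {d : ℕ} {F G : (p : ℕ) → p < d → Matrix (ι p) (ι (p + 1)) ℝ}
    (h : ∀ p hp, F p hp = G p hp) : ttProd ι d F = ttProd ι d G :=
  congrArg (ttProd ι d) (funext₂ h)

variable (A : (p : ℕ) → Fin 2 → Matrix (ι p) (ι (p + 1)) ℝ)

noncomputable def qttPrefix (m q : ℕ) : Matrix (ι 0) (ι q) ℝ :=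
  ttProd ι q fun p _ => A p (qttBit p m)

theorem qttPrefix_succ (m q : ℕ) : qttPrefix A m (q + 1) = qttPrefix A m q * A q (qttBit q m) :=
  rfl

theorem qttPrefix_congr {m m' q : ℕ} (h : m % 2 ^ q = m' % 2 ^ q) :
    qttPrefix A m q = qttPrefix A m' q :=
  ttProd_congr fun p hp => by
    rw [← qttBit_mod_two_pow hp m, h, qttBit_mod_two_pow hp m']

theorem qttPrefix_two_pow (s : ℕ) :
    qttPrefix A (2 ^ s) (s + 1) = ttProd ι (s + 1) fun p _ => A p (if p = s then 1 else 0) :=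
  ttProd_congr fun p hp => by rw [qttBit_two_pow (Nat.lt_succ_iff.1 hp)]

theorem qttPrefix_succ_of_carry {s k : ℕ} (h : 2 ^ s ∣ k + 1) (hb : qttBit s k = 0) :
    qttPrefix A (k + 1) (s + 1) = ttProd ι (s + 1) fun p _ => A p (if p = s then 1 else 0) := by
  rw [← qttPrefix_two_pow]
  apply qttPrefix_congr
  rw [succ_mod_two_pow_succ h hb, Nat.mod_eq_of_lt (Nat.pow_lt_pow_succ one_lt_two)]

noncomputable def shiftFirstCore (k : ℕ) : Matrix (ι 0) (ι 1 ⊕ Unit) ℝ :=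
  Matrix.of fun (i : ι 0) (jc : ι 1 ⊕ Unit) =>
    if qttBit 0 k = 0 then
      Sum.elim (fun j => A 0 1 i j) (fun _ => 0) jc
    else Sum.elim (fun _ => (0 : ℝ)) (fun _ => 1) jc

noncomputable def shiftPrefix (k q : ℕ) : Matrix (ι 0) (ι (q + 1) ⊕ Unit) ℝ :=
  if 2 ^ (q + 1) ∣ k + 1 then fromCols 0 (of fun _ _ => 1)
  else fromCols (qttPrefix A (k + 1) (q + 1)) 0

theorem shiftFirstCore_eq_shiftPrefix (k : ℕ) : shiftFirstCore A k = shiftPrefix A k 0 := by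
  unfold shiftPrefix
  by_cases hb : qttBit 0 k = 0
  · have hndvd : ¬ 2 ^ (0 + 1) ∣ k + 1 := by rw [two_pow_succ_dvd_succ_iff, hb]; simp
    rw [if_neg hndvd, qttPrefix_succ_of_carry A (by simp) hb]
    ext i (j | j) <;> simp [shiftFirstCore, hb, ttProd]
  · have hdvd : 2 ^ (0 + 1) ∣ k + 1 :=
      two_pow_succ_dvd_succ_iff.2 ⟨by simp, Fin.eq_one_of_ne_zero _ hb⟩
    rw [if_pos hdvd]
    ext i (j | j) <;> simp [shiftFirstCore, hb]

theorem shiftPrefix_mul_fromRows (y : ℝ) (k q : ℕ) :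
    shiftPrefix A k q * (fromRows 1 (of fun _ _ => y) : Matrix (ι (q + 1) ⊕ Unit) (ι (q + 1)) ℝ) =
      if 2 ^ (q + 1) ∣ k + 1 then of fun _ _ => y else qttPrefix A (k + 1) (q + 1) := by
  unfold shiftPrefix
  split_ifs
  · ext
    simp [mul_apply]
  · simp [fromCols_mul_fromRows]

variable [Unique (ι 0)]

noncomputable def shiftMidCore (k q : ℕ) : Matrix (ι (q + 1) ⊕ Unit) (ι (q + 2) ⊕ Unit) ℝ :=
  if qttBit (q + 1) k = 0 then
    Matrix.fromBlocks (A (q + 1) 0) 0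
      (Matrix.of fun (_ : Unit) j =>
        ttProd ι (q + 2)
          (fun p' _ => A p' (if p' = q + 1 then 1 else 0)) default j) 0
  else
    Matrix.fromBlocks (A (q + 1) 1) 0 0 1

noncomputable def shiftLastCore (y : ℝ) (k s : ℕ) : Matrix (ι (s + 1) ⊕ Unit) (ι (s + 2)) ℝ :=
  Matrix.of fun (ic : ι (s + 1) ⊕ Unit) (j : ι (s + 2)) =>
    if qttBit (s + 1) k = 0 then
      Sum.elim (fun i => A (s + 1) 0 i j)
        (fun _ => ttProd ι (s + 2)
          (fun p' _ => A p' (if p' = s + 1 then 1 else 0)) default j) ic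
    else
      Sum.elim (fun i => A (s + 1) 1 i j) (fun _ => y) ic

theorem shiftPrefix_mul_shiftMidCore (k q : ℕ) :
    shiftPrefix A k q * shiftMidCore A k q = shiftPrefix A k (q + 1) := by
  unfold shiftPrefix shiftMidCore
  by_cases hc : 2 ^ (q + 1) ∣ k + 1
  · by_cases hb : qttBit (q + 1) k = 0
    · have hndvd : ¬ 2 ^ (q + 1 + 1) ∣ k + 1 := by rw [two_pow_succ_dvd_succ_iff, hb]; simp
      rw [if_pos hc, if_pos hb, if_neg hndvd, qttPrefix_succ_of_carry A hc hb,
        fromCols_mul_fromBlocks]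
      ext i (j | j) <;> simp [mul_apply, Unique.eq_default i]
    · have hdvd : 2 ^ (q + 1 + 1) ∣ k + 1 :=
        two_pow_succ_dvd_succ_iff.2 ⟨hc, Fin.eq_one_of_ne_zero _ hb⟩
      rw [if_pos hc, if_neg hb, if_pos hdvd, fromCols_mul_fromBlocks]
      simp
  · have hndvd : ¬ 2 ^ (q + 1 + 1) ∣ k + 1 := fun h => hc (two_pow_succ_dvd_succ_iff.1 h).1
    rw [if_neg hc, if_neg hndvd, qttPrefix_succ A (k + 1) (q + 1), qttBit_succ_of_not_dvd hc]
    split_ifs with hb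
    · simp [fromCols_mul_fromBlocks, hb]
    · simp [fromCols_mul_fromBlocks, Fin.eq_one_of_ne_zero _ hb]

theorem shiftFirstCore_mul_ttProd_shiftMidCore (k q : ℕ) :
    shiftFirstCore A k * ttProd (fun p => ι (p + 1) ⊕ Unit) q (fun r _ => shiftMidCore A k r) =
      shiftPrefix A k q := by
  induction q with
  | zero => exact (Matrix.mul_one _).trans (shiftFirstCore_eq_shiftPrefix A k)
  | succ q ih =>
    rw [ttProd, ← Matrix.mul_assoc, ih, shiftPrefix_mul_shiftMidCore]

theorem shiftLastCore_eq_shiftMidCore_mul (y : ℝ) (k s : ℕ) :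
    shiftLastCore A y k s = shiftMidCore A k s *
      (fromRows 1 (of fun _ _ => y) : Matrix (ι (s + 2) ⊕ Unit) (ι (s + 2)) ℝ) := by
  unfold shiftMidCore
  split_ifs with hb <;>
    · rw [fromBlocks_mul_fromRows]
      ext (i | i) j <;> simp [shiftLastCore, hb]

end QTT

/-- Here `d = e + 2` and cores are indexed from `0`: `A p` is the paper's `A⁽ᵖ⁺¹⁾`. -/
theorem qtt_left_shift
    (e : ℕ)
    (ι : ℕ → Type) [∀ p, Fintype (ι p)] [∀ p, DecidableEq (ι p)]
    [Unique (ι 0)] [Unique (ι (e + 2))]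
    (A : (p : ℕ) → Fin 2 → Matrix (ι p) (ι (p + 1)) ℝ)
    (a c : Fin (2 ^ (e + 2)) → ℝ) (y : ℝ)
    (ha : ∀ k : Fin (2 ^ (e + 2)),
      a k = ttProd ι (e + 2) (fun p _ => A p (qttBit p (k : ℕ))) default default)
    (hcs : ∀ k : ℕ, (h : k + 1 < 2 ^ (e + 2)) → c ⟨k, by omega⟩ = a ⟨k + 1, h⟩)
    (hclast : c ⟨2 ^ (e + 2) - 1, by have := Nat.one_le_two_pow (n := e + 2); omega⟩ = y) :
    ∀ k : Fin (2 ^ (e + 2)),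
      c k =
        ((Matrix.of fun (i : ι 0) (jc : ι 1 ⊕ Unit) =>
            if qttBit 0 (k : ℕ) = 0 then
              Sum.elim (fun j => A 0 1 i j) (fun _ => 0) jc
            else Sum.elim (fun _ => (0 : ℝ)) (fun _ => 1) jc)
          * ttProd (fun p => ι (p + 1) ⊕ Unit) e (fun q _ =>
              if qttBit (q + 1) (k : ℕ) = 0 then
                Matrix.fromBlocks (A (q + 1) 0) 0
                  (Matrix.of fun (_ : Unit) j =>
                    ttProd ι (q + 2)
                      (fun p' _ => A p' (if p' = q + 1 then 1 else 0)) default j) 0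
              else
                Matrix.fromBlocks (A (q + 1) 1) 0 0 1)
          * Matrix.of fun (ic : ι (e + 1) ⊕ Unit) (j : ι (e + 2)) =>
              if qttBit (e + 1) (k : ℕ) = 0 then
                Sum.elim (fun i => A (e + 1) 0 i j)
                  (fun _ => ttProd ι (e + 2)
                    (fun p' _ => A p' (if p' = e + 1 then 1 else 0)) default j) ic
              else
                Sum.elim (fun i => A (e + 1) 1 i j) (fun _ => y) ic)
          default default := by
  rintro ⟨k, hk⟩
  change c ⟨k, hk⟩ = (shiftFirstCore A k * ttProd (fun p => ι (p + 1) ⊕ Unit) e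
    (fun q _ => shiftMidCore A k q) * shiftLastCore A y k e) default default
  rw [shiftLastCore_eq_shiftMidCore_mul, ← Matrix.mul_assoc, shiftFirstCore_mul_ttProd_shiftMidCore, shiftPrefix_mul_shiftMidCore, shiftPrefix_mul_fromRows]
  split_ifs with hdvd
  · have hlast : k = 2 ^ (e + 2) - 1 := by
      have : 2 ^ (e + 2) ≤ k + 1 := Nat.le_of_dvd k.succ_pos hdvd
      omega
    subst hlast
    exact hclast
  · have hk1 : k + 1 < 2 ^ (e + 2) := lt_of_le_of_ne hk fun h => hdvd (h ▸ dvd_rfl)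
    exact (hcs k hk1).trans (ha _)
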